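/- Let H be a complex separable infinite-dimensional Hilbert space, let E ⊆ c₀ be a Banach symmetric sequence space, and let C_E be the associated Banach symmetric ideal. If x_n ∈ C_E are positive operators with x_{n+1} ≤ x_n for all n and x_n ↓ 0 (the sequence decreases to 0 in the operator order), then the series Σ_{n=1}^∞ (x_n − x_{n+1}) converges weakly unconditionally in C_E, i.e. Σ_{n=1}^∞ |f(x_n − x_{n+1})| < ∞ for every continuous linear functional f on C_E. -/

import Mathlib

open scoped InnerProductSpace
open Filter Topology

noncomputable section

/-- The non-increasing rearrangement `x*` of a bounded real sequence:
`x*_n = inf_{|F| ≤ n} sup_{k ∉ F} |x k|`. -/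
noncomputable def decRearrange (x : ℕ → ℝ) (n : ℕ) : ℝ :=
  sInf {c : ℝ | ∃ F : Finset ℕ, F.card ≤ n ∧ ∀ k ∉ F, |x k| ≤ c}

/-- A Banach symmetric sequence space: a nonzero linear subspace of `ℓ∞` (real bounded
sequences) equipped with a complete norm such that `x* ≤ y*` pointwise and `y ∈ E` imply
`x ∈ E` with `‖x‖_E ≤ ‖y‖_E`. -/
structure BanachSymmSeqSpace where
  carrier : Set (ℕ → ℝ)
  bdd : ∀ x ∈ carrier, ∃ C : ℝ, ∀ n, |x n| ≤ C
  zero_mem : (0 : ℕ → ℝ) ∈ carrier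
  add_mem : ∀ x ∈ carrier, ∀ y ∈ carrier, x + y ∈ carrier
  smul_mem : ∀ (c : ℝ), ∀ x ∈ carrier, c • x ∈ carrier
  nontrivial : ∃ x ∈ carrier, x ≠ 0
  nrm : (ℕ → ℝ) → ℝ
  nrm_zero : nrm 0 = 0
  nrm_pos : ∀ x ∈ carrier, x ≠ 0 → 0 < nrm x
  nrm_smul : ∀ (c : ℝ), ∀ x ∈ carrier, nrm (c • x) = |c| * nrm x
  nrm_triangle : ∀ x ∈ carrier, ∀ y ∈ carrier, nrm (x + y) ≤ nrm x + nrm y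
  complete : ∀ u : ℕ → ℕ → ℝ, (∀ n, u n ∈ carrier) →
    (∀ ε : ℝ, 0 < ε → ∃ N, ∀ m ≥ N, ∀ k ≥ N, nrm (u m - u k) < ε) →
    ∃ x ∈ carrier, ∀ ε : ℝ, 0 < ε → ∃ N, ∀ m ≥ N, nrm (u m - x) < ε
  symmetric : ∀ x : ℕ → ℝ, ∀ y ∈ carrier, (∃ C : ℝ, ∀ n, |x n| ≤ C) →
    (∀ n, decRearrange x n ≤ decRearrange y n) → x ∈ carrier ∧ nrm x ≤ nrm y

/-- `E ⊆ c₀`: every element of `E` tends to zero. -/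
def BanachSymmSeqSpace.SubsetC0 (S : BanachSymmSeqSpace) : Prop :=
  ∀ x ∈ S.carrier, Filter.Tendsto x Filter.atTop (nhds 0)

/-- The Fatou property of a Banach symmetric sequence space. -/
def BanachSymmSeqSpace.Fatou (S : BanachSymmSeqSpace) : Prop :=
  ∀ a : ℕ → ℕ → ℝ, (∀ k, a k ∈ S.carrier) → (∀ k n, 0 ≤ a k n) →
    (∀ k n, a k n ≤ a (k + 1) n) → (∃ C : ℝ, ∀ k, S.nrm (a k) ≤ C) →
    ∃ b ∈ S.carrier, (∀ n, IsLUB {r : ℝ | ∃ k, r = a k n} (b n)) ∧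
      IsLUB {r : ℝ | ∃ k, r = S.nrm (a k)} (S.nrm b)

/-- `E = ℓ₂` as a set of sequences. -/
def ellTwo : Set (ℕ → ℝ) := {x : ℕ → ℝ | Summable fun n => (x n) ^ 2}

section OperatorIdeal

variable {H : Type*} [NormedAddCommGroup H] [InnerProductSpace ℂ H] [CompleteSpace H]

/-- The `n`-th singular value (approximation number) of an operator:
`s_n(x) = inf { ‖x - F‖ : rank F ≤ n }` (so `s_0(x) = ‖x‖`). For compact operators this is
the `n`-th eigenvalue (in decreasing order) of `(x*x)^{1/2}`. -/
noncomputable def singVal (x : H →L[ℂ] H) (n : ℕ) : ℝ :=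
  sInf {c : ℝ | ∃ F : H →L[ℂ] H, FiniteDimensional ℂ (LinearMap.range (F : H →ₗ[ℂ] H)) ∧
    Module.finrank ℂ (LinearMap.range (F : H →ₗ[ℂ] H)) ≤ n ∧ ‖x - F‖ = c}

/-- The Banach symmetric ideal `C_E` of compact operators whose singular value sequence
belongs to `E`. -/
def CE (S : BanachSymmSeqSpace) : Set (H →L[ℂ] H) :=
  {x | IsCompactOperator (⇑x) ∧ (fun n => singVal x n) ∈ S.carrier}

/-- The norm `‖x‖_{C_E} = ‖{s_n(x)}‖_E` of the Banach symmetric ideal `C_E`. -/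
noncomputable def CEnorm (S : BanachSymmSeqSpace) (x : H →L[ℂ] H) : ℝ :=
  S.nrm (fun n => singVal x n)

/-- A trace class operator: a compact operator with summable singular values. -/
def IsTraceClass (z : H →L[ℂ] H) : Prop :=
  IsCompactOperator (⇑z) ∧ Summable fun n => singVal z n

/-- The Köthe dual `C_E^× = { y ∈ B(H) : x y is trace class for every x ∈ C_E }`. -/
def KDual (S : BanachSymmSeqSpace) : Set (H →L[ℂ] H) :=
  {y : H →L[ℂ] H | ∀ x ∈ CE (H := H) S, IsTraceClass (x * y)}

/-- The trace of an operator computed with respect to a Hilbert basis `b`: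
`tr z = Σ_i ⟪b i, z (b i)⟫` (basis independent for trace class operators). -/
noncomputable def traceB (b : HilbertBasis ℕ ℂ H) (z : H →L[ℂ] H) : ℂ :=
  ∑' i, ⟪b i, z (b i)⟫_ℂ

/-- The weak topology `σ(C_E, C_E^×)` on `C_E`, generated by the functionals
`x ↦ tr (x y)`, `y ∈ C_E^×`. -/
noncomputable def sigmaTop (S : BanachSymmSeqSpace) (b : HilbertBasis ℕ ℂ H) :
    TopologicalSpace {x : H →L[ℂ] H // x ∈ CE (H := H) S} :=
  ⨅ y : {y : H →L[ℂ] H // y ∈ KDual (H := H) S},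
    TopologicalSpace.induced (fun x => traceB b (x.1 * y.1)) inferInstance

/-- The ball topology `b_{C_E}`: the coarsest topology in which every closed norm ball
of `(C_E, ‖·‖_{C_E})` is closed. -/
noncomputable def ballTop (S : BanachSymmSeqSpace) :
    TopologicalSpace {x : H →L[ℂ] H // x ∈ CE (H := H) S} :=
  TopologicalSpace.generateFrom
    {s | ∃ (c : {x : H →L[ℂ] H // x ∈ CE (H := H) S}) (ε : ℝ), 0 < ε ∧
      s = {y : {x : H →L[ℂ] H // x ∈ CE (H := H) S} | CEnorm S (y.1 - c.1) ≤ ε}ᶜ}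

/-- `W` is a surjective (complex-)linear isometry of the Banach symmetric ideal `C_E`. -/
def SurjLinearIsomOn (S : BanachSymmSeqSpace) (W : (H →L[ℂ] H) → (H →L[ℂ] H)) : Prop :=
  (∀ x ∈ CE (H := H) S, W x ∈ CE (H := H) S) ∧
  (∀ y ∈ CE (H := H) S, ∃ x ∈ CE (H := H) S, W x = y) ∧
  (∀ x ∈ CE (H := H) S, ∀ y ∈ CE (H := H) S, W (x + y) = W x + W y) ∧
  (∀ (c : ℂ), ∀ x ∈ CE (H := H) S, W (c • x) = c • W x) ∧
  (∀ x ∈ CE (H := H) S, CEnorm S (W x) = CEnorm S x)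

end OperatorIdeal

end

/-!
Every finite partial sum `∑_{n ∈ G} (x_n - x_{n+1})` lies between `0` and `x_0` in the operator
order. If `0 ≤ y ≤ w` and `F` has rank at most `n`, compressing by the projection `P` onto `ker F`
gives `‖P y P‖ ≤ ‖P w P‖ = ‖P (w - F) P‖ ≤ ‖w - F‖`, while `y - P y P` has rank at most `2n`; hence
`s_{2n}(y) ≤ s_n(w)`. So `y` is compact and its singular values are dominated by the dilation
`k ↦ s_{⌊k/2⌋}(w)`, the sum of two rearrangements of `s(w)`, which gives
`‖y‖_{C_E} ≤ 2 ‖w‖_{C_E}`. Thus `f` is bounded on all finite partial sums of the series, and a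
complex series with bounded finite partial sums converges absolutely.
-/

open ContinuousLinearMap

section SingularValues

variable {H : Type*} [NormedAddCommGroup H] [InnerProductSpace ℂ H]

lemma singVal_le_norm_sub {x F : H →L[ℂ] H} {n : ℕ}
    (hF : FiniteDimensional ℂ (LinearMap.range (F : H →ₗ[ℂ] H)))
    (hrk : Module.finrank ℂ (LinearMap.range (F : H →ₗ[ℂ] H)) ≤ n) :
    singVal x n ≤ ‖x - F‖ :=
  csInf_le ⟨0, by rintro c ⟨G, -, -, rfl⟩; positivity⟩ ⟨F, hF, hrk, rfl⟩

lemma finiteDimensional_range_zero :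
    FiniteDimensional ℂ (LinearMap.range ((0 : H →L[ℂ] H) : H →ₗ[ℂ] H)) := by
  rw [ContinuousLinearMap.toLinearMap_zero, LinearMap.range_zero]
  infer_instance

lemma finrank_range_zero :
    Module.finrank ℂ (LinearMap.range ((0 : H →L[ℂ] H) : H →ₗ[ℂ] H)) = 0 := by
  rw [ContinuousLinearMap.toLinearMap_zero, LinearMap.range_zero, finrank_bot]

lemma singValSet_nonempty (x : H →L[ℂ] H) (n : ℕ) :
    {c : ℝ | ∃ F : H →L[ℂ] H, FiniteDimensional ℂ (LinearMap.range (F : H →ₗ[ℂ] H)) ∧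
      Module.finrank ℂ (LinearMap.range (F : H →ₗ[ℂ] H)) ≤ n ∧ ‖x - F‖ = c}.Nonempty :=
  ⟨_, 0, finiteDimensional_range_zero, finrank_range_zero.trans_le n.zero_le, rfl⟩

lemma le_singVal {x : H →L[ℂ] H} {n : ℕ} {c : ℝ}
    (h : ∀ F : H →L[ℂ] H, FiniteDimensional ℂ (LinearMap.range (F : H →ₗ[ℂ] H)) →
      Module.finrank ℂ (LinearMap.range (F : H →ₗ[ℂ] H)) ≤ n → c ≤ ‖x - F‖) :
    c ≤ singVal x n :=
  le_csInf (singValSet_nonempty x n) (by rintro _ ⟨F, hF, hrk, rfl⟩; exact h F hF hrk)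

lemma exists_norm_sub_lt_singVal_add (x : H →L[ℂ] H) (n : ℕ) {ε : ℝ} (hε : 0 < ε) :
    ∃ F : H →L[ℂ] H, FiniteDimensional ℂ (LinearMap.range (F : H →ₗ[ℂ] H)) ∧
      ‖x - F‖ < singVal x n + ε := by
  obtain ⟨-, ⟨F, hF, -, rfl⟩, hlt⟩ :=
    exists_lt_of_csInf_lt (singValSet_nonempty x n) (lt_add_of_pos_right (singVal x n) hε)
  exact ⟨F, hF, hlt⟩

lemma singVal_nonneg (x : H →L[ℂ] H) (n : ℕ) : 0 ≤ singVal x n :=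
  le_singVal fun _ _ _ ↦ norm_nonneg _

lemma singVal_le_norm (x : H →L[ℂ] H) (n : ℕ) : singVal x n ≤ ‖x‖ := by
  simpa using singVal_le_norm_sub (x := x) finiteDimensional_range_zero
    (finrank_range_zero.trans_le n.zero_le)

lemma singVal_antitone (x : H →L[ℂ] H) : Antitone (singVal x) :=
  fun _ _ hmn ↦ le_singVal fun _ hF hrk ↦ singVal_le_norm_sub hF (hrk.trans hmn)

lemma isCompactOperator_of_finiteDimensional_range (F : H →L[ℂ] H)
    [FiniteDimensional ℂ (LinearMap.range (F : H →ₗ[ℂ] H))] : IsCompactOperator F :=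
  (isCompactOperator_of_locallyCompactSpace_dom
    (F.codRestrict (LinearMap.range (F : H →ₗ[ℂ] H)) (LinearMap.mem_range_self _))).continuous_comp
    continuous_subtype_val

lemma isCompactOperator_of_tendsto_singVal [CompleteSpace H] {x : H →L[ℂ] H}
    (hx : Tendsto (singVal x) atTop (𝓝 0)) : IsCompactOperator x := by
  have hε : ∀ k : ℕ, (0 : ℝ) < 1 / (k + 1) := fun k ↦ by positivity
  choose F hF hnorm using fun k ↦ exists_norm_sub_lt_singVal_add x k (hε k)
  have hlim : Tendsto F atTop (𝓝 x) := by
    rw [tendsto_iff_norm_sub_tendsto_zero]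
    refine squeeze_zero (fun _ ↦ norm_nonneg _)
      (fun k ↦ (norm_sub_rev _ _).trans_le (hnorm k).le) ?_
    simpa using hx.add tendsto_one_div_add_atTop_nhds_zero_nat
  exact isCompactOperator_of_tendsto hlim
    (Eventually.of_forall fun k ↦ isCompactOperator_of_finiteDimensional_range (F k))

end SingularValues

section Approximation

noncomputable def orthogonalKerEquivRange {𝕜 E E' : Type*} [RCLike 𝕜] [NormedAddCommGroup E]
    [InnerProductSpace 𝕜 E] [CompleteSpace E] [NormedAddCommGroup E'] [NormedSpace 𝕜 E']
    (F : E →L[𝕜] E') :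
    (LinearMap.ker (F : E →ₗ[𝕜] E'))ᗮ ≃ₗ[𝕜] LinearMap.range (F : E →ₗ[𝕜] E') :=
  (Submodule.quotientEquivOfIsCompl _ _ (Submodule.isCompl_orthogonal _)).symm.trans
    (F : E →ₗ[𝕜] E').quotKerEquivRange

variable {H : Type*} [NormedAddCommGroup H] [InnerProductSpace ℂ H] [CompleteSpace H]

lemma singVal_two_mul_le_norm_sub {y w F : H →L[ℂ] H} (hy : 0 ≤ y) (hyw : y ≤ w) {n : ℕ}
    (hF : FiniteDimensional ℂ (LinearMap.range (F : H →ₗ[ℂ] H)))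
    (hrk : Module.finrank ℂ (LinearMap.range (F : H →ₗ[ℂ] H)) ≤ n) :
    singVal y (2 * n) ≤ ‖w - F‖ := by
  set K := LinearMap.ker (F : H →ₗ[ℂ] H)
  set P := K.starProjection
  have hP : IsSelfAdjoint P := isSelfAdjoint_starProjection K
  have hFP : F * P = 0 := by
    ext v
    exact K.starProjection_apply_mem v
  have : FiniteDimensional ℂ Kᗮ := (orthogonalKerEquivRange F).symm.finiteDimensional
  have hKrk : Module.finrank ℂ Kᗮ ≤ n := (orthogonalKerEquivRange F).finrank_eq.trans_le hrk
  have hrange : LinearMap.range ((y - P * y * P : H →L[ℂ] H) : H →ₗ[ℂ] H) ≤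
      Kᗮ.map (y : H →ₗ[ℂ] H) ⊔ Kᗮ := by
    rintro - ⟨v, rfl⟩
    have hv : (y - P * y * P) v = y (v - P v) + (y (P v) - P (y (P v))) := by
      simp only [sub_apply, mul_apply_eq_comp, map_sub]
      abel
    rw [ContinuousLinearMap.coe_coe, hv]
    exact Submodule.add_mem_sup ⟨v - P v, K.sub_starProjection_mem_orthogonal v, rfl⟩
      (K.sub_starProjection_mem_orthogonal _)
  have hG : FiniteDimensional ℂ (LinearMap.range ((y - P * y * P : H →L[ℂ] H) : H →ₗ[ℂ] H)) :=
    Submodule.finiteDimensional_of_le hrange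
  have hGrk : Module.finrank ℂ (LinearMap.range ((y - P * y * P : H →L[ℂ] H) : H →ₗ[ℂ] H)) ≤
      2 * n :=
    calc _ ≤ Module.finrank ℂ (Kᗮ.map (y : H →ₗ[ℂ] H) ⊔ Kᗮ : Submodule ℂ H) :=
          Submodule.finrank_mono hrange
      _ ≤ Module.finrank ℂ (Kᗮ.map (y : H →ₗ[ℂ] H)) + Module.finrank ℂ Kᗮ :=
          Submodule.finrank_add_le_finrank_add_finrank _ _
      _ ≤ n + n := add_le_add ((Submodule.finrank_map_le _ _).trans hKrk) hKrk
      _ = 2 * n := by ring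
  calc singVal y (2 * n) ≤ ‖y - (y - P * y * P)‖ := singVal_le_norm_sub hG hGrk
    _ = ‖P * y * P‖ := by rw [sub_sub_cancel]
    _ ≤ ‖P * w * P‖ := CStarAlgebra.norm_le_norm_of_nonneg_of_le (hP.conjugate_nonneg hy)
          (hP.conjugate_le_conjugate hyw)
    _ = ‖P * (w - F) * P‖ := by rw [mul_sub, sub_mul, mul_assoc P F, hFP, mul_zero, sub_zero]
    _ ≤ ‖P‖ * ‖w - F‖ * ‖P‖ := norm_mul₃_le
    _ ≤ 1 * ‖w - F‖ * 1 := by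
          gcongr <;> exact K.starProjection_norm_le
    _ = ‖w - F‖ := by ring

lemma singVal_two_mul_le {y w : H →L[ℂ] H} (hy : 0 ≤ y) (hyw : y ≤ w) (n : ℕ) :
    singVal y (2 * n) ≤ singVal w n :=
  le_singVal fun _ hF hrk ↦ singVal_two_mul_le_norm_sub hy hyw hF hrk

lemma tendsto_singVal_of_le {y w : H →L[ℂ] H} (hy : 0 ≤ y) (hyw : y ≤ w)
    (hw : Tendsto (singVal w) atTop (𝓝 0)) : Tendsto (singVal y) atTop (𝓝 0) :=
  squeeze_zero (singVal_nonneg y)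
    (fun n ↦ (singVal_antitone y (Nat.mul_div_le n 2)).trans (singVal_two_mul_le hy hyw (n / 2)))
    (hw.comp (Nat.tendsto_div_const_atTop two_ne_zero))

end Approximation

section Rearrangement

lemma decRearrange_le {x : ℕ → ℝ} {n : ℕ} {c : ℝ} (F : Finset ℕ) (hF : F.card ≤ n)
    (hc : ∀ k ∉ F, |x k| ≤ c) : decRearrange x n ≤ c := by
  refine csInf_le ⟨0, ?_⟩ ⟨F, hF, hc⟩
  rintro c ⟨G, -, hG⟩
  obtain ⟨k, hk⟩ := G.exists_notMem
  exact (abs_nonneg _).trans (hG k hk)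

lemma decRearrange_eq_of_antitone {s : ℕ → ℝ} (hs : Antitone s) (h0 : ∀ n, 0 ≤ s n) (n : ℕ) :
    decRearrange s n = s n := by
  refine le_antisymm (decRearrange_le (Finset.range n) (by simp) fun k hk ↦ ?_) ?_
  · rw [abs_of_nonneg (h0 k)]
    exact hs (by simpa using hk)
  · refine le_csInf ⟨s 0, ∅, by simp, fun k _ ↦ (abs_of_nonneg (h0 k)).trans_le (hs k.zero_le)⟩ ?_
    rintro c ⟨F, hF, hc⟩
    obtain ⟨k, hk, hkF⟩ := Finset.exists_mem_notMem_of_card_lt_card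
      (s := F) (t := Finset.range (n + 1)) (by rw [Finset.card_range]; omega)
    exact (hs (Finset.mem_range_succ_iff.mp hk)).trans ((le_abs_self _).trans (hc k hkF))

lemma decRearrange_parityPart_le {s : ℕ → ℝ} (hs : Antitone s) (h0 : ∀ n, 0 ≤ s n) (r n : ℕ) :
    decRearrange (fun k ↦ if k % 2 = r then s (k / 2) else 0) n ≤ s n := by
  refine decRearrange_le ((Finset.range n).image (2 * · + r)) (Finset.card_image_le.trans (by simp))
    fun k hk ↦ ?_
  split_ifs with hr
  · rw [abs_of_nonneg (h0 _)]
    refine hs (not_lt.mp fun hlt ↦ hk (Finset.mem_image.mpr ⟨k / 2, Finset.mem_range.mpr hlt, ?_⟩))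
    omega
  · simpa using h0 n

end Rearrangement

namespace BanachSymmSeqSpace

variable (S : BanachSymmSeqSpace)

lemma nrm_nonneg {a : ℕ → ℝ} (ha : a ∈ S.carrier) : 0 ≤ S.nrm a := by
  rcases eq_or_ne a 0 with rfl | h
  · rw [S.nrm_zero]
  · exact (S.nrm_pos a ha h).le

lemma parityPart_mem {s : ℕ → ℝ} (hs : s ∈ S.carrier) (hanti : Antitone s) (h0 : ∀ n, 0 ≤ s n)
    (r : ℕ) : (fun k ↦ if k % 2 = r then s (k / 2) else 0) ∈ S.carrier ∧
      S.nrm (fun k ↦ if k % 2 = r then s (k / 2) else 0) ≤ S.nrm s := by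
  refine S.symmetric _ s hs ⟨s 0, fun k ↦ ?_⟩ fun n ↦
    (decRearrange_parityPart_le hanti h0 r n).trans (decRearrange_eq_of_antitone hanti h0 n).ge
  split_ifs
  · rw [abs_of_nonneg (h0 _)]
    exact hanti (Nat.zero_le _)
  · simpa using h0 0

lemma dilation_mem {s : ℕ → ℝ} (hs : s ∈ S.carrier) (hanti : Antitone s) (h0 : ∀ n, 0 ≤ s n) :
    (fun k ↦ s (k / 2)) ∈ S.carrier ∧ S.nrm (fun k ↦ s (k / 2)) ≤ 2 * S.nrm s := by
  obtain ⟨heven, heven_nrm⟩ := S.parityPart_mem hs hanti h0 0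
  obtain ⟨hodd, hodd_nrm⟩ := S.parityPart_mem hs hanti h0 1
  have hsplit : (fun k ↦ s (k / 2)) = (fun k ↦ if k % 2 = 0 then s (k / 2) else 0) +
      fun k ↦ if k % 2 = 1 then s (k / 2) else 0 := by
    funext k
    rcases Nat.mod_two_eq_zero_or_one k with h | h <;> simp [h]
  rw [hsplit]
  exact ⟨S.add_mem _ heven _ hodd, (S.nrm_triangle _ heven _ hodd).trans (by linarith)⟩

end BanachSymmSeqSpace

theorem mem_CE_of_nonneg_of_le {H : Type*} [NormedAddCommGroup H] [InnerProductSpace ℂ H]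
    [CompleteSpace H] (S : BanachSymmSeqSpace) (hc0 : S.SubsetC0) {y w : H →L[ℂ] H}
    (hw : w ∈ CE S) (hy : 0 ≤ y) (hyw : y ≤ w) : y ∈ CE S ∧ CEnorm S y ≤ 2 * CEnorm S w := by
  obtain ⟨-, hws⟩ := hw
  obtain ⟨hdil, hdil_nrm⟩ := S.dilation_mem hws (singVal_antitone w) (singVal_nonneg w)
  have hdil_anti : Antitone fun k ↦ singVal w (k / 2) :=
    fun _ _ h ↦ singVal_antitone w (Nat.div_le_div_right h)
  have hle : ∀ n, decRearrange (singVal y) n ≤ decRearrange (fun k ↦ singVal w (k / 2)) n := by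
    intro n
    rw [decRearrange_eq_of_antitone (singVal_antitone y) (singVal_nonneg y),
      decRearrange_eq_of_antitone hdil_anti fun k ↦ singVal_nonneg w _]
    exact (singVal_antitone y (Nat.mul_div_le n 2)).trans (singVal_two_mul_le hy hyw _)
  obtain ⟨hys, hy_nrm⟩ := S.symmetric _ _ hdil
    ⟨‖y‖, fun n ↦ (abs_of_nonneg (singVal_nonneg y n)).trans_le (singVal_le_norm y n)⟩ hle
  exact ⟨⟨isCompactOperator_of_tendsto_singVal (tendsto_singVal_of_le hy hyw (hc0 _ hws)), hys⟩,
    hy_nrm.trans hdil_nrm⟩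

lemma Antitone.sum_sub_succ_le {α : Type*} [AddCommGroup α] [PartialOrder α] [IsOrderedAddMonoid α]
    {x : ℕ → α} (hx : Antitone x) (h0 : ∀ n, 0 ≤ x n) (G : Finset ℕ) :
    ∑ n ∈ G, (x n - x (n + 1)) ≤ x 0 := by
  obtain ⟨N, hGN⟩ := G.exists_nat_subset_range
  calc ∑ n ∈ G, (x n - x (n + 1)) ≤ ∑ n ∈ Finset.range N, (x n - x (n + 1)) :=
        Finset.sum_le_sum_of_subset_of_nonneg hGN fun n _ _ ↦ sub_nonneg.mpr (hx n.le_succ)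
    _ = x 0 - x N := Finset.sum_range_sub' x N
    _ ≤ x 0 := sub_le_self _ (h0 N)

lemma map_sum_of_additiveOn {ι M N : Type*} [AddCommMonoid M] [AddCommMonoid N] {A : Set M}
    {f : M → N} (hadd : ∀ a ∈ A, ∀ b ∈ A, f (a + b) = f a + f b) (h0 : f 0 = 0) {g : ι → M}
    (hg : ∀ i, g i ∈ A) (hsum : ∀ s : Finset ι, ∑ i ∈ s, g i ∈ A) (s : Finset ι) :
    f (∑ i ∈ s, g i) = ∑ i ∈ s, f (g i) := by
  induction s using Finset.cons_induction with
  | empty => simpa using h0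
  | cons i s hi ih => rw [Finset.sum_cons, Finset.sum_cons, hadd _ (hg i) _ (hsum s), ih]

lemma sum_abs_le_of_forall_abs_sum_le {ι : Type*} {a : ι → ℝ} {B : ℝ}
    (h : ∀ s : Finset ι, |∑ i ∈ s, a i| ≤ B) (s : Finset ι) : ∑ i ∈ s, |a i| ≤ 2 * B := by
  classical
  have hpos : ∑ i ∈ s with 0 ≤ a i, |a i| ≤ B := by
    rw [Finset.sum_congr rfl fun i hi ↦ abs_of_nonneg (Finset.mem_filter.mp hi).2]
    exact (le_abs_self _).trans (h _)
  have hneg : ∑ i ∈ s with ¬0 ≤ a i, |a i| ≤ B := by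
    rw [Finset.sum_congr rfl fun i hi ↦ abs_of_neg (not_le.mp (Finset.mem_filter.mp hi).2),
      Finset.sum_neg_distrib]
    exact (neg_le_abs _).trans (h _)
  rw [← Finset.sum_filter_add_sum_filter_not s (0 ≤ a ·)]
  linarith

lemma summable_norm_of_forall_norm_sum_le {ι : Type*} {a : ι → ℂ} {B : ℝ}
    (h : ∀ s : Finset ι, ‖∑ i ∈ s, a i‖ ≤ B) : Summable fun i ↦ ‖a i‖ := by
  have hre := sum_abs_le_of_forall_abs_sum_le (a := fun i ↦ (a i).re) fun s ↦ by
    simpa only [Complex.re_sum] using (Complex.abs_re_le_norm _).trans (h s)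
  have him := sum_abs_le_of_forall_abs_sum_le (a := fun i ↦ (a i).im) fun s ↦ by
    simpa only [Complex.im_sum] using (Complex.abs_im_le_norm _).trans (h s)
  refine summable_of_sum_le (c := 4 * B) (fun i ↦ norm_nonneg _) fun s ↦ ?_
  calc ∑ i ∈ s, ‖a i‖ ≤ ∑ i ∈ s, (|(a i).re| + |(a i).im|) :=
        Finset.sum_le_sum fun i _ ↦ Complex.norm_le_abs_re_add_abs_im _
    _ ≤ 4 * B := by rw [Finset.sum_add_distrib]; linarith [hre s, him s]

theorem decreasing_differences_weakly_unconditional_general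
    {H : Type*} [NormedAddCommGroup H] [InnerProductSpace ℂ H] [CompleteSpace H]
    (S : BanachSymmSeqSpace) (hc0 : S.SubsetC0)
    (x : ℕ → H →L[ℂ] H) (hmem : ∀ n, x n ∈ CE (H := H) S)
    (hpos : ∀ n, (x n).IsPositive)
    (hdec : ∀ n, (x n - x (n + 1)).IsPositive) :
    ∀ f : (H →L[ℂ] H) → ℂ,
      (∀ a ∈ CE (H := H) S, ∀ b ∈ CE (H := H) S, f (a + b) = f a + f b) →
      (∀ (c : ℂ), ∀ a ∈ CE (H := H) S, f (c • a) = c * f a) →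
      (∃ M : ℝ, ∀ a ∈ CE (H := H) S, ‖f a‖ ≤ M * CEnorm S a) →
      Summable fun n => ‖f (x n - x (n + 1))‖ := by
  rintro f hadd hsmul ⟨M, hM⟩
  have hx0 : ∀ n, 0 ≤ x n := fun n ↦ (nonneg_iff_isPositive _).mpr (hpos n)
  have hsucc : ∀ n, x (n + 1) ≤ x n := fun n ↦ (le_def _ _).mpr (hdec n)
  have hanti : Antitone x := antitone_nat_of_succ_le hsucc
  have hdiff : ∀ n, 0 ≤ x n - x (n + 1) := fun n ↦ sub_nonneg.mpr (hsucc n)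
  have hpartial : ∀ G : Finset ℕ, ∑ n ∈ G, (x n - x (n + 1)) ∈ CE S ∧
      CEnorm S (∑ n ∈ G, (x n - x (n + 1))) ≤ 2 * CEnorm S (x 0) := fun G ↦
    mem_CE_of_nonneg_of_le S hc0 (hmem 0) (Finset.sum_nonneg fun n _ ↦ hdiff n)
      (hanti.sum_sub_succ_le hx0 G)
  have hterm : ∀ n, x n - x (n + 1) ∈ CE S := fun n ↦
    (mem_CE_of_nonneg_of_le S hc0 (hmem n) (hdiff n) (sub_le_self _ (hx0 (n + 1)))).1
  have hf0 : f 0 = 0 := by simpa using hsmul 0 _ (hmem 0)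
  refine summable_norm_of_forall_norm_sum_le (B := |M| * (2 * CEnorm S (x 0))) fun G ↦ ?_
  rw [← map_sum_of_additiveOn hadd hf0 hterm fun G ↦ (hpartial G).1]
  calc _ ≤ M * CEnorm S (∑ n ∈ G, (x n - x (n + 1))) := hM _ (hpartial G).1
    _ ≤ |M| * CEnorm S (∑ n ∈ G, (x n - x (n + 1))) :=
        mul_le_mul_of_nonneg_right (le_abs_self M) (S.nrm_nonneg (hpartial G).1.2)
    _ ≤ |M| * (2 * CEnorm S (x 0)) := mul_le_mul_of_nonneg_left (hpartial G).2 (abs_nonneg M)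

/-- If `x_n ∈ C_E` are positive operators decreasing to `0` in the
operator order, then the series `Σ (x_n − x_{n+1})` converges weakly unconditionally in
`C_E`: `Σ |f(x_n − x_{n+1})| < ∞` for every continuous linear functional `f` on `C_E`. -/
theorem decreasing_differences_weakly_unconditional
    {H : Type*} [NormedAddCommGroup H] [InnerProductSpace ℂ H] [CompleteSpace H]
    [TopologicalSpace.SeparableSpace H] (hinf : ¬ FiniteDimensional ℂ H)
    (S : BanachSymmSeqSpace) (hc0 : S.SubsetC0)
    (x : ℕ → H →L[ℂ] H) (hmem : ∀ n, x n ∈ CE (H := H) S)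
    (hpos : ∀ n, (x n).IsPositive)
    (hdec : ∀ n, (x n - x (n + 1)).IsPositive)
    (hinf0 : ∀ z : H →L[ℂ] H, (∀ n, (x n - z).IsPositive) → (-z).IsPositive) :
    ∀ f : (H →L[ℂ] H) → ℂ,
      (∀ a ∈ CE (H := H) S, ∀ b ∈ CE (H := H) S, f (a + b) = f a + f b) →
      (∀ (c : ℂ), ∀ a ∈ CE (H := H) S, f (c • a) = c * f a) →
      (∃ M : ℝ, ∀ a ∈ CE (H := H) S, ‖f a‖ ≤ M * CEnorm S a) →
      Summable fun n => ‖f (x n - x (n + 1))‖ :=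
  decreasing_differences_weakly_unconditional_general S hc0 x hmem hpos hdec
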